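/- arXiv:2409.14649 — 7 statements merged into one kernel-verified Lean document; each statement's English description precedes it below -/
import Mathlib

section
/- Let a be a character, n ≥ 2, and let F₁⋯F_z be the LZD factorization of the unary string aⁿ. Then for every x ≥ 1 with 2^{x+1} − 2 ≤ n, the factor F_x equals a^{2^x}; that is, the factor lengths double (1st factor length 2, 2nd length 4, 3rd length 8, …) as long as enough text remains. -/
/-- The LZD parsing dictionary available for the factor at (0-indexed) position `x`:
all previous factors together with all length-one strings. -/
def LZDDict {α : Type*} (F : List (List α)) (x : ℕ) : Set (List α) :=
  { w | (∃ y < x, w = F.getD y []) ∨ (∃ c : α, w = [c]) }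

/-- `F` is the LZD factorization of `T`: the factors concatenate to `T`, and each factor
is `R₁ ++ R₂`, where `R₁` is the longest prefix of the remaining text contained in the
current dictionary, and `R₂` is the longest prefix of the text remaining after `R₁`
contained in the current dictionary (`R₂ = []` if `R₁` exhausts the remaining text). -/
def IsLZD {α : Type*} (T : List α) (F : List (List α)) : Prop :=
  F.flatten = T ∧
  ∀ x < F.length,
    ∃ R₁ R₂ : List α,
      F.getD x [] = R₁ ++ R₂ ∧
      R₁ ∈ LZDDict F x ∧
      R₁ <+: (F.drop x).flatten ∧
      (∀ w ∈ LZDDict F x, w <+: (F.drop x).flatten → w.length ≤ R₁.length) ∧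
      ((R₁.length = ((F.drop x).flatten).length ∧ R₂ = []) ∨
       (R₁.length < ((F.drop x).flatten).length ∧
        R₂ ∈ LZDDict F x ∧
        R₂ <+: ((F.drop x).flatten).drop R₁.length ∧
        ∀ w ∈ LZDDict F x, w <+: ((F.drop x).flatten).drop R₁.length →
          w.length ≤ R₂.length))

lemma lzd_prefix_replicate {α : Type*} {a : α} {m : ℕ} {w : List α}
    (h : w <+: List.replicate m a) : w = List.replicate w.length a := by
  obtain ⟨t, ht⟩ := h
  refine List.eq_replicate_iff.mpr ⟨rfl, fun b hb => ?_⟩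
  exact List.eq_of_mem_replicate (ht ▸ List.mem_append_left _ hb)

lemma lzd_replicate_prefix {α : Type*} (a : α) {j m : ℕ} (h : j ≤ m) :
    List.replicate j a <+: List.replicate m a :=
  ⟨List.replicate (m - j) a, by rw [← List.replicate_add]; congr 1; omega⟩

lemma lzd_drop_flatten_eq {α : Type*} {a : α} {n : ℕ} {F : List (List α)}
    (hT : F.flatten = List.replicate n a) (k : ℕ) :
    (F.drop k).flatten = List.replicate ((F.drop k).flatten).length a := by
  refine List.eq_replicate_iff.mpr ⟨rfl, fun b hb => ?_⟩
  obtain ⟨l, hl, hbl⟩ := List.mem_flatten.mp hb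
  have : b ∈ F.flatten := List.mem_flatten.mpr ⟨l, (List.drop_sublist k F).mem hl, hbl⟩
  exact List.eq_of_mem_replicate (hT ▸ this)

lemma lzd_unary_aux {α : Type*} (a : α) (n : ℕ)
    (F : List (List α)) (hF : IsLZD (List.replicate n a) F) :
    ∀ k : ℕ, 2 ^ (k + 2) - 2 ≤ n →
      ((F.drop k).flatten).length = n - (2 ^ (k + 1) - 2) ∧
      k < F.length ∧ F.getD k [] = List.replicate (2 ^ (k + 1)) a := by
  obtain ⟨hT, hfac⟩ := hF
  intro k
  induction k using Nat.strong_induction_on with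
  | _ k IH =>
  intro hk
  -- basic power facts
  have hp1 : (1 : ℕ) ≤ 2 ^ k := Nat.one_le_two_pow
  have hp2 : 2 ^ (k + 1) = 2 * 2 ^ k := by ring
  have hp3 : 2 ^ (k + 2) = 4 * 2 ^ k := by ring
  -- length of remaining text
  have hmk : ((F.drop k).flatten).length = n - (2 ^ (k + 1) - 2) := by
    cases k with
    | zero => simp [hT]
    | succ j =>
      have hk' : 2 ^ (j + 3) - 2 ≤ n := hk
      have hj : 2 ^ (j + 2) - 2 ≤ n := by
        have : 2 ^ (j + 2) ≤ 2 ^ (j + 3) := Nat.pow_le_pow_right (by norm_num) (by omega)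
        omega
      obtain ⟨hmj, hjlen, hfj⟩ := IH j (by omega) hj
      have hdrop : F.drop j = (F.getD j []) :: F.drop (j + 1) := by
        rw [List.getD_eq_getElem _ _ hjlen]; exact List.drop_eq_getElem_cons hjlen
      have hlen : ((F.drop j).flatten).length
          = (F.getD j []).length + ((F.drop (j + 1)).flatten).length := by
        rw [hdrop]; simp
      rw [hfj] at hlen
      simp only [List.length_replicate] at hlen
      have e1 : 2 ^ (j + 2) = 2 * 2 ^ (j + 1) := by ring
      have e2 : (1 : ℕ) ≤ 2 ^ (j + 1) := Nat.one_le_two_pow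
      have e3 : (2 : ℕ) ^ (j + 1 + 1) = 2 ^ (j + 2) := rfl
      omega
  have hmk2 : 2 ^ (k + 1) ≤ ((F.drop k).flatten).length := by omega
  have hklen : k < F.length := by
    by_contra h
    have : F.drop k = [] := List.drop_eq_nil_of_le (by omega)
    rw [this] at hmk2
    simp only [List.flatten_nil, List.length_nil, Nat.le_zero] at hmk2
    omega
  refine ⟨hmk, hklen, ?_⟩
  set m := ((F.drop k).flatten).length with hm
  have hrep : (F.drop k).flatten = List.replicate m a := lzd_drop_flatten_eq hT k
  -- dictionary length bound
  have hdict : ∀ w ∈ LZDDict F k, w.length ≤ 2 ^ k := by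
    rintro w (⟨y, hy, rfl⟩ | ⟨c, rfl⟩)
    · have hy2 : 2 ^ (y + 2) - 2 ≤ n := by
        have : 2 ^ (y + 2) ≤ 2 ^ (k + 2) := Nat.pow_le_pow_right (by norm_num) (by omega)
        omega
      obtain ⟨_, _, hfy⟩ := IH y hy hy2
      rw [hfy, List.length_replicate]
      exact Nat.pow_le_pow_right (by norm_num) (by omega)
    · simpa using hp1
  -- witness in dictionary
  have hwit : List.replicate (2 ^ k) a ∈ LZDDict F k := by
    cases k with
    | zero => exact Or.inr ⟨a, by simp⟩
    | succ j =>
      have hk' : 2 ^ (j + 3) - 2 ≤ n := hk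
      have hj : 2 ^ (j + 2) - 2 ≤ n := by
        have : 2 ^ (j + 2) ≤ 2 ^ (j + 3) := Nat.pow_le_pow_right (by norm_num) (by omega)
        omega
      obtain ⟨_, _, hfj⟩ := IH j (by omega) hj
      exact Or.inl ⟨j, by omega, hfj.symm⟩
  obtain ⟨R₁, R₂, heq, hR₁dict, hR₁pre, hR₁max, hdisj⟩ := hfac k hklen
  have hR₁ge : 2 ^ k ≤ R₁.length := by
    have := hR₁max _ hwit (by rw [hrep]; exact lzd_replicate_prefix a (by omega))
    simpa using this
  have hR₁len : R₁.length = 2 ^ k := le_antisymm (hdict _ hR₁dict) hR₁ge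
  have hR₁eq : R₁ = List.replicate (2 ^ k) a := by
    have := lzd_prefix_replicate (hrep ▸ hR₁pre)
    rwa [hR₁len] at this
  rcases hdisj with ⟨hlen, _⟩ | ⟨_, hR₂dict, hR₂pre, hR₂max⟩
  · omega
  · have hdrop2 : ((F.drop k).flatten).drop R₁.length = List.replicate (m - 2 ^ k) a := by
      rw [hrep, hR₁len, List.drop_replicate]
    have hR₂ge : 2 ^ k ≤ R₂.length := by
      have := hR₂max _ hwit (by rw [hdrop2]; exact lzd_replicate_prefix a (by omega))
      simpa using this
    have hR₂len : R₂.length = 2 ^ k := le_antisymm (hdict _ hR₂dict) hR₂ge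
    have hR₂eq : R₂ = List.replicate (2 ^ k) a := by
      have := lzd_prefix_replicate (hdrop2 ▸ hR₂pre)
      rwa [hR₂len] at this
    rw [heq, hR₁eq, hR₂eq, ← List.replicate_add]
    congr 1
    omega


/-- In the LZD factorization of the unary string `T = aⁿ` (`n ≥ 2`), for every `x ≥ 1`
with `2^(x+1) − 2 ≤ n`, the `x`-th factor (1-indexed) equals `a^(2^x)`:
the factor lengths are `2, 4, 8, …` as long as enough text remains. -/
theorem lzd_unary_factors {α : Type*} (a : α) (n : ℕ) (hn : 2 ≤ n)
    (F : List (List α)) (hF : IsLZD (List.replicate n a) F) :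
    ∀ x : ℕ, 1 ≤ x → 2 ^ (x + 1) - 2 ≤ n →
      x - 1 < F.length ∧ F.getD (x - 1) [] = List.replicate (2 ^ x) a := by

  intro x hx hle
  obtain ⟨k, rfl⟩ : ∃ k, x = k + 1 := ⟨x - 1, by omega⟩
  have h := lzd_unary_aux a n F hF k hle
  exact ⟨h.2.1, h.2.2⟩
end

section
/- There exist real constants c₁, c₂ > 0 such that for every n ≥ 2 the number z of factors of the LZD factorization of the unary string aⁿ satisfies c₁·log₂ n ≤ z ≤ c₂·log₂ n; concretely, z ≥ log₂(n) − 1. Hence the number of LZD factors of aⁿ is Θ(log n). -/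
def DkP (ℓ : ℕ → ℕ) (x k : ℕ) : Prop := k = 1 ∨ ∃ y < x, k = ℓ y

theorem lzd_arith (n z : ℕ) (ℓ m : ℕ → ℕ) (hn : 2 ≤ n) (hz : 1 ≤ z)
    (hm0 : m 0 = n) (hmz : m z = 0)
    (hrec : ∀ x < z, m x = ℓ x + m (x+1))
    (hstep : ∀ x < z, ∃ r₁ r₂ : ℕ,
      ℓ x = r₁ + r₂ ∧ DkP ℓ x r₁ ∧ r₁ ≤ m x ∧
      (∀ k, DkP ℓ x k → k ≤ m x → k ≤ r₁) ∧
      ((r₁ = m x ∧ r₂ = 0) ∨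
       (r₁ < m x ∧ DkP ℓ x r₂ ∧ r₂ ≤ m x - r₁ ∧
        ∀ k, DkP ℓ x k → k ≤ m x - r₁ → k ≤ r₂))) :
    n + 2 ≤ 2^(z+1) ∧ ∃ p, 2^p ≤ n ∧ 2*z ≤ 3*p + 2 := by
  -- all factors nonempty
  have hpos : ∀ x, x < z → 1 ≤ ℓ x := by
    intro x
    induction x using Nat.strong_induction_on with
    | _ x ih =>
      intro hx
      obtain ⟨r₁, r₂, hl, hd, hle, hmax, _⟩ := hstep x hx
      rcases Nat.eq_zero_or_pos (m x) with h0 | h1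
      · exfalso
        have hr0 : r₁ = 0 := by omega
        rcases hd with h | ⟨y, hy, hk⟩
        · omega
        · have := ih y (by omega) (by omega); omega
      · have := hmax 1 (Or.inl rfl) h1; omega
  -- factor length upper bound
  have hub : ∀ x, x < z → ℓ x ≤ 2^(x+1) := by
    intro x
    induction x using Nat.strong_induction_on with
    | _ x ih =>
      intro hx
      obtain ⟨r₁, r₂, hl, hd, hle, hmax, hr2⟩ := hstep x hx
      have hbound : ∀ k, DkP ℓ x k → k ≤ 2^x := by
        intro k hk
        rcases hk with h | ⟨y, hy, hk⟩
        · have : 1 ≤ 2^x := Nat.one_le_two_pow; omega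
        · have h1 := ih y hy (by omega)
          have h2 : 2^(y+1) ≤ 2^x := Nat.pow_le_pow_right (by norm_num) (by omega)
          omega
      have h1 := hbound r₁ hd
      have h2 : r₂ ≤ 2^x := by
        rcases hr2 with ⟨_, h⟩ | ⟨_, hd2, _, _⟩
        · have : 1 ≤ 2^x := Nat.one_le_two_pow; omega
        · exact hbound r₂ hd2
      have h3 : 2^(x+1) = 2^x + 2^x := by ring
      omega
  have key : ∀ j, j ≤ z → m (z - j) + 2^(z - j + 1) ≤ 2^(z+1) := by
    intro j
    induction j with
    | zero =>
      intro _
      simp only [Nat.sub_zero, hmz]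
      omega
    | succ j ih =>
      intro hj
      have hx : z - (j+1) < z := by omega
      have h1 := hrec _ hx
      have h2 := hub _ hx
      have h3 := ih (by omega)
      have he : z - j = z - (j+1) + 1 := by omega
      rw [he] at h3
      have h4 : 2^(z - (j+1) + 1 + 1) = 2^(z - (j+1) + 1) + 2^(z - (j+1) + 1) := by ring
      omega
  have hmain : n + 2 ≤ 2^(z+1) := by
    have := key z (le_refl z)
    simp only [Nat.sub_self] at this
    omega
  refine ⟨hmain, ?_⟩
  -- p : first time remaining drops below 2^(x+1)
  have hex : ∃ x, m x < 2^(x+1) := ⟨z, by rw [hmz]; positivity⟩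
  set p := Nat.find hex with hpdef
  have hp : m p < 2^(p+1) := Nat.find_spec hex
  have hplt : ∀ x, x < p → 2^(x+1) ≤ m x := by
    intro x hx
    have := Nat.find_min hex hx
    omega
  have hpz : p ≤ z := Nat.find_min' hex (by rw [hmz]; positivity)
  -- doubling phase
  have hdouble : ∀ x, x < p → ℓ x = 2^(x+1) := by
    intro x
    induction x using Nat.strong_induction_on with
    | _ x ih =>
      intro hx
      have hxz : x < z := by omega
      obtain ⟨r₁, r₂, hl, hd, hle, hmax, hr2⟩ := hstep x hxz
      have hm2 : 2^(x+1) ≤ m x := hplt x hx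
      have hpid : 2^(x+1) = 2^x + 2^x := by ring
      have hDk2x : DkP ℓ x (2^x) := by
        rcases Nat.eq_zero_or_pos x with h0 | h1
        · left; simp [h0]
        · right
          refine ⟨x-1, by omega, ?_⟩
          rw [ih (x-1) (by omega) (by omega)]
          congr 1
          omega
      have hDbound : ∀ k, DkP ℓ x k → k ≤ 2^x := by
        intro k hk
        rcases hk with h | ⟨y, hy, hk⟩
        · have : 1 ≤ 2^x := Nat.one_le_two_pow; omega
        · have h1 := ih y hy (by omega)
          have h2 : 2^(y+1) ≤ 2^x := Nat.pow_le_pow_right (by norm_num) (by omega)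
          omega
      have hr1 : r₁ = 2^x :=
        le_antisymm (hDbound _ hd) (hmax _ hDk2x (by omega))
      rcases hr2 with ⟨h, _⟩ | ⟨_, hd2, _, hmax2⟩
      · omega
      · have hr2' : r₂ = 2^x :=
          le_antisymm (hDbound _ hd2) (hmax2 _ hDk2x (by omega))
        omega
  -- consumed amount through the doubling phase
  have hcons : ∀ j, j ≤ p → 2^(j+1) + m j = n + 2 := by
    intro j
    induction j with
    | zero => intro _; rw [hm0]; omega
    | succ j ih =>
      intro hj
      have h1 := hrec j (by omega)
      have h2 := hdouble j (by omega)
      have h3 := ih (by omega)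
      have h4 : 2^(j+1+1) = 2^(j+1) + 2^(j+1) := by ring
      omega
  have hpn : 2^p ≤ n := by
    have h1 := hcons p (le_refl p)
    rcases Nat.eq_zero_or_pos p with h0 | h1'
    · rw [h0]; simp; omega
    · have h2 : 2^(p+1) = 2^p + 2^p := by ring
      have h3 : 2 ≤ 2^p := by
        calc 2 = 2^1 := by norm_num
        _ ≤ 2^p := Nat.pow_le_pow_right (by norm_num) h1'
      omega
  refine ⟨p, hpn, ?_⟩
  -- tail phase
  have hpow2 : ∀ t, 1 ≤ t → ∃ i, 2^i ≤ t ∧ t < 2^(i+1) := by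
    intro t ht
    exact ⟨Nat.log 2 t, Nat.pow_log_le_self 2 (by omega), Nat.lt_pow_succ_log_self (by norm_num) t⟩
  have hDkpow : ∀ x, p ≤ x → ∀ i, i ≤ p → DkP ℓ x (2^i) := by
    intro x hx i hi
    rcases Nat.eq_zero_or_pos i with h0 | h1
    · left; simp [h0]
    · right
      refine ⟨i-1, by omega, ?_⟩
      rw [hdouble (i-1) (by omega)]
      congr 1
      omega
  have htail : ∀ x, p ≤ x → x < z → m x < 2^(p+1) →
      4 * m (x+1) ≤ m x ∧ m (x+1) < 2^(p+1) := by
    intro x hpx hxz hmx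
    obtain ⟨r₁, r₂, hl, hd, hle, hmax, hr2⟩ := hstep x hxz
    have hrecx := hrec x hxz
    have hm1 : 1 ≤ m x := by have := hpos x hxz; omega
    obtain ⟨j, hj1, hj2⟩ := hpow2 (m x) hm1
    have hjp : j ≤ p := by
      by_contra h
      have : 2^(p+1) ≤ 2^j := Nat.pow_le_pow_right (by norm_num) (by omega)
      omega
    have hr1 : 2^j ≤ r₁ := hmax _ (hDkpow x hpx j hjp) hj1
    have ej : 2^(j+1) = 2^j + 2^j := by ring
    rcases hr2 with ⟨hq, hq2⟩ | ⟨hlt, hd2, hle2, hmax2⟩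
    · constructor <;> omega
    · have ht1 : 1 ≤ m x - r₁ := by omega
      obtain ⟨i, hi1, hi2⟩ := hpow2 _ ht1
      have hip : i ≤ p := by
        by_contra h
        have h5 : 2^(p+1) ≤ 2^i := Nat.pow_le_pow_right (by norm_num) (by omega)
        omega
      have hr2i : 2^i ≤ r₂ := hmax2 _ (hDkpow x hpx i hip) hi1
      have ei : 2^(i+1) = 2^i + 2^i := by ring
      constructor <;> omega
  have hiter : ∀ j, p + j ≤ z → m (p+j) < 2^(p+1) ∧ 4^j * m (p+j) ≤ m p := by
    intro j
    induction j with
    | zero => intro _; exact ⟨hp, by simp⟩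
    | succ j ih =>
      intro hj
      obtain ⟨h1, h2⟩ := ih (by omega)
      obtain ⟨h3, h4⟩ := htail (p+j) (by omega) (by omega) h1
      have he : p + (j+1) = (p+j)+1 := by omega
      rw [he]
      refine ⟨h4, ?_⟩
      have e1 : 4^(j+1) * m ((p+j)+1) = 4^j * (4 * m ((p+j)+1)) := by ring
      rw [e1]
      calc 4^j * (4*m ((p+j)+1)) ≤ 4^j * m (p+j) := Nat.mul_le_mul_left _ h3
        _ ≤ m p := h2
  rcases le_or_gt z p with h | h
  · omega
  · have hj : p + (z - 1 - p) ≤ z := by omega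
    obtain ⟨_, h2⟩ := hiter (z-1-p) hj
    have he : p + (z-1-p) = z-1 := by omega
    rw [he] at h2
    have hml : 1 ≤ m (z-1) := by
      have h3 := hpos (z-1) (by omega)
      have h4 := hrec (z-1) (by omega)
      have h5 : z - 1 + 1 = z := by omega
      rw [h5, hmz] at h4
      omega
    have h6 : 4^(z-1-p) ≤ m p := by
      calc 4^(z-1-p) = 4^(z-1-p) * 1 := by ring
        _ ≤ 4^(z-1-p) * m (z-1) := Nat.mul_le_mul_left _ hml
        _ ≤ m p := h2
    have h7 : (4:ℕ)^(z-1-p) = 2^(2*(z-1-p)) := by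
      rw [show (4:ℕ) = 2^2 from rfl, ← pow_mul]
    have h8 : 2^(2*(z-1-p)) < 2^(p+1) := by omega
    have h9 : 2*(z-1-p) < p+1 := by
      exact (Nat.pow_lt_pow_iff_right (by norm_num)).mp h8
    omega

theorem lzd_extract {α : Type*} (a : α) (n : ℕ) (F : List (List α))
    (hn : 2 ≤ n) (hF : IsLZD (List.replicate n a) F) :
    ∃ ℓ m : ℕ → ℕ, 1 ≤ F.length ∧ m 0 = n ∧ m F.length = 0 ∧
      (∀ x < F.length, m x = ℓ x + m (x+1)) ∧
      (∀ x < F.length, ∃ r₁ r₂ : ℕ,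
        ℓ x = r₁ + r₂ ∧ DkP ℓ x r₁ ∧ r₁ ≤ m x ∧
        (∀ k, DkP ℓ x k → k ≤ m x → k ≤ r₁) ∧
        ((r₁ = m x ∧ r₂ = 0) ∨
         (r₁ < m x ∧ DkP ℓ x r₂ ∧ r₂ ≤ m x - r₁ ∧
          ∀ k, DkP ℓ x k → k ≤ m x - r₁ → k ≤ r₂))) := by
  obtain ⟨hflat, hfacts⟩ := hF
  set z := F.length with hzdef
  refine ⟨fun x => (F.getD x []).length, fun x => ((F.drop x).flatten).length, ?_, ?_, ?_, ?_, ?_⟩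
  case _ => -- 1 ≤ z
    rcases Nat.eq_zero_or_pos z with h0 | h1
    · exfalso
      have : F = [] := List.length_eq_zero_iff.mp h0
      rw [this] at hflat
      have := congrArg List.length hflat
      simp at this
      omega
    · exact h1
  case _ => simp [hflat]
  case _ => simp [hzdef]
  case _ =>
    intro x hx
    show ((F.drop x).flatten).length = (F.getD x []).length + ((F.drop (x+1)).flatten).length
    rw [List.getD_eq_getElem F [] hx, List.drop_eq_getElem_cons hx, List.flatten_cons,
      List.length_append]
  case _ =>
    set ℓ : ℕ → ℕ := fun x => (F.getD x []).length with hldef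
    set m : ℕ → ℕ := fun x => ((F.drop x).flatten).length with hmdef
    have hmemflat : ∀ c ∈ F.flatten, c = a := by
      rw [hflat]; intro c hc; exact List.eq_of_mem_replicate hc
    have hfac : ∀ x, x < z → F.getD x [] = List.replicate (ℓ x) a := by
      intro x hx
      have h1 : F.getD x [] = F[x] := List.getD_eq_getElem F [] hx
      have h2 : ℓ x = F[x].length := congrArg List.length h1
      rw [h1, h2]
      apply List.eq_replicate_length.mpr
      intro c hc
      exact hmemflat c (List.mem_flatten.mpr ⟨F[x], List.getElem_mem hx, hc⟩)
    have hdropflat : ∀ x, (F.drop x).flatten = List.replicate (m x) a := by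
      intro x
      apply List.eq_replicate_length.mpr
      intro c hc
      obtain ⟨w, hw, hcw⟩ := List.mem_flatten.mp hc
      exact hmemflat c (List.mem_flatten.mpr ⟨w, List.drop_subset x F hw, hcw⟩)
    have hdk : ∀ x (w : List α), w ∈ LZDDict F x → DkP ℓ x w.length := by
      intro x w hw
      rcases hw with ⟨y, hy, he⟩ | ⟨c, he⟩
      · right; exact ⟨y, hy, by rw [he]⟩
      · left; simp [he]
    have hrepdict : ∀ x k, x < z → DkP ℓ x k → List.replicate k a ∈ LZDDict F x := by
      intro x k hx hk
      rcases hk with h1 | ⟨y, hy, he⟩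
      · right; exact ⟨a, by rw [h1]; rfl⟩
      · left; exact ⟨y, hy, by rw [he, ← hfac y (by omega)]⟩
    have hprefix : ∀ x k, k ≤ m x → List.replicate k a <+: (F.drop x).flatten := by
      intro x k hk
      rw [hdropflat x]
      exact ⟨List.replicate (m x - k) a, by rw [← List.replicate_add]; congr 1; omega⟩
    intro x hx
    obtain ⟨R₁, R₂, hsum, hd1, hpre1, hmax1, hcase⟩ := hfacts x hx
    refine ⟨R₁.length, R₂.length, ?_, hdk x R₁ hd1, hpre1.length_le, ?_, ?_⟩
    · show (F.getD x []).length = _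
      rw [hsum, List.length_append]
    · intro k hk hkm
      have h1 := hmax1 (List.replicate k a) (hrepdict x k hx hk) (hprefix x k hkm)
      simpa using h1
    · rcases hcase with ⟨h1, h2⟩ | ⟨h1, h2, h3, h4⟩
      · left; exact ⟨h1, by rw [h2]; rfl⟩
      · right
        refine ⟨h1, hdk x R₂ h2, ?_, ?_⟩
        · have h5 := h3.length_le
          rw [List.length_drop] at h5
          exact h5
        · intro k hk hkm
          have hp : List.replicate k a <+: ((F.drop x).flatten).drop R₁.length := by
            rw [hdropflat x, List.drop_replicate]
            exact ⟨List.replicate (m x - R₁.length - k) a, by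
              rw [← List.replicate_add]; congr 1; omega⟩
          have h6 := h4 (List.replicate k a) (hrepdict x k hx hk) hp
          simpa using h6

/-- There are constants `c₁, c₂ > 0` such that for every `n ≥ 2` the number `z` of LZD
factors of the unary string `aⁿ` satisfies `c₁·log₂ n ≤ z ≤ c₂·log₂ n`; concretely
`z ≥ log₂ n − 1`. Hence the number of LZD factors of `aⁿ` is `Θ(log n)`. -/
theorem lzd_unary_num_factors {α : Type*} (a : α) :
    ∃ c₁ c₂ : ℝ, 0 < c₁ ∧ 0 < c₂ ∧
      ∀ (n : ℕ) (F : List (List α)), 2 ≤ n → IsLZD (List.replicate n a) F →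
        c₁ * Real.logb 2 n ≤ (F.length : ℝ) ∧
        (F.length : ℝ) ≤ c₂ * Real.logb 2 n ∧
        Real.logb 2 n - 1 ≤ (F.length : ℝ) := by
  refine ⟨1/2, 5/2, by norm_num, by norm_num, ?_⟩
  intro n F hn hF
  obtain ⟨ℓ, m, hz1, hm0, hmz, hrec, hstep⟩ := lzd_extract a n F hn hF
  obtain ⟨hmain, p, hpn, hzp⟩ := lzd_arith n F.length ℓ m hn hz1 hm0 hmz hrec hstep
  set z := F.length with hzdef
  set L := Real.logb 2 n with hLdef
  have hnR : (2:ℝ) ≤ (n:ℝ) := by exact_mod_cast hn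
  have hnpos : (0:ℝ) < n := by linarith
  have hL1 : (1:ℝ) ≤ L := by
    have h1 := (Real.logb_le_logb (b := 2) (by norm_num) (by norm_num) hnpos).mpr hnR
    simpa using h1
  have hlow : L ≤ (z:ℝ) + 1 := by
    have h1 : (n:ℝ) ≤ 2^(z+1) := by
      have h2 : (n:ℝ) ≤ ((2^(z+1) : ℕ) : ℝ) := by exact_mod_cast Nat.le_of_add_right_le hmain
      simpa using h2
    calc L ≤ Real.logb 2 ((2:ℝ)^(z+1)) :=
          (Real.logb_le_logb (by norm_num) hnpos (by positivity)).mpr h1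
      _ = (z:ℝ) + 1 := by
          rw [Real.logb_pow]
          simp
  have hup : (p:ℝ) ≤ L := by
    have h1 : ((2:ℝ))^p ≤ (n:ℝ) := by exact_mod_cast hpn
    calc (p:ℝ) = Real.logb 2 ((2:ℝ)^p) := by rw [Real.logb_pow]; simp
      _ ≤ L := (Real.logb_le_logb (by norm_num) (by positivity) hnpos).mpr h1
  have hzR : (z:ℝ) ≥ 1 := by exact_mod_cast hz1
  have hzpR : 2 * (z:ℝ) ≤ 3 * (p:ℝ) + 2 := by exact_mod_cast hzp
  refine ⟨?_, ?_, by linarith⟩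
  · rcases le_or_gt L 2 with h | h
    · linarith
    · linarith
  · linarith
end

section
/- Let Fib denote the Fibonacci numbers with Fib(1) = Fib(2) = 1 and Fib(k+2) = Fib(k) + Fib(k+1). Let a be a character, n ≥ 1, and let F₁⋯F_z be the LZMW factorization of the unary string aⁿ. Then for every x ≥ 1 with Fib(x+2) − 1 ≤ n, the factor F_x equals a^{Fib(x)}; that is, the factor lengths follow the Fibonacci numbers 1, 1, 2, 3, 5, 8, … as long as enough text remains. -/
/-- The LZMW parsing dictionary available for the factor at (0-indexed) position `x`:
all concatenations of two consecutive factors both completed before position `x`,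
together with all length-one strings. -/
def LZMWDict {α : Type*} (F : List (List α)) (x : ℕ) : Set (List α) :=
  { w | (∃ i, 1 ≤ i ∧ i < x ∧ w = F.getD (i - 1) [] ++ F.getD i []) ∨ (∃ c : α, w = [c]) }

/-- `F` is the LZMW factorization of `T`: the factors concatenate to `T`, and each factor
is the longest prefix of the remaining text contained in the current LZMW dictionary. -/
def IsLZMW {α : Type*} (T : List α) (F : List (List α)) : Prop :=
  F.flatten = T ∧
  ∀ x < F.length,
    F.getD x [] ∈ LZMWDict F x ∧
    ∀ w ∈ LZMWDict F x, w <+: (F.drop x).flatten → w.length ≤ (F.getD x []).length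

/-!
On a unary text every factor is a power of `a`, so a factor is determined by its length, and
a dictionary word fits into the remaining text exactly when it is short enough. By induction
the factors have lengths `Fib 1, …, Fib x`, so the longest dictionary word is the concatenation
of the last two factors, of length `Fib (x + 1)`; the bound `Fib (x + 3) ≤ n + 1` says precisely
that it still fits, so it is the next factor.
-/

open List Nat

theorem List.length_flatten_take_add_one {α : Type*} (F : List (List α)) (k : ℕ) :
    (F.take (k + 1)).flatten.length = (F.take k).flatten.length + (F.getD k []).length := by
  rw [take_add_one, getD_eq_getElem?_getD]
  cases F[k]? <;> simp

theorem List.length_flatten_take_add_one_eq_fib {α : Type*} {F : List (List α)} {k : ℕ}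
    (h : ∀ j < k, (F.getD j []).length = fib (j + 1)) :
    (F.take k).flatten.length + 1 = fib (k + 2) := by
  induction k with
  | zero => simp
  | succ k ih =>
    rw [length_flatten_take_add_one, h k k.lt_add_one, fib_add_two (n := k + 1),
      ← ih fun j hj => h j (by omega)]
    omega

theorem length_le_of_mem_LZMWDict {α : Type*} {F : List (List α)} {w : List α} {x B : ℕ}
    (hw : w ∈ LZMWDict F x) (hB : 1 ≤ B)
    (h : ∀ i, 1 ≤ i → i < x → (F.getD (i - 1) []).length + (F.getD i []).length ≤ B) :
    w.length ≤ B := by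
  rcases hw with ⟨i, hi, hix, rfl⟩ | ⟨c, rfl⟩
  · simpa using h i hi hix
  · simpa using hB

namespace IsLZMW

variable {α : Type*} {T : List α} {F : List (List α)}

theorem lt_length_of_length_flatten_take_lt (hF : IsLZMW T F) {k : ℕ}
    (hk : (F.take k).flatten.length < T.length) : k < F.length := by
  by_contra h
  rw [take_of_length_le (not_lt.1 h), hF.1] at hk
  exact lt_irrefl _ hk

theorem length_getD_of_lt_two (hF : IsLZMW T F) {k : ℕ} (hk : k < 2) (hkF : k < F.length) :
    (F.getD k []).length = 1 := by
  rcases (hF.2 k hkF).1 with ⟨i, hi, hik, -⟩ | ⟨c, hc⟩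
  · omega
  · rw [hc, length_singleton]

theorem length_append_getD_le_length_getD (hF : IsLZMW T F) {i x : ℕ} (hi : 1 ≤ i) (hix : i < x)
    (hx : x < F.length) (hpre : F.getD (i - 1) [] ++ F.getD i [] <+: (F.drop x).flatten) :
    (F.getD (i - 1) []).length + (F.getD i []).length ≤ (F.getD x []).length := by
  simpa using (hF.2 x hx).2 _ (Or.inl ⟨i, hi, hix, rfl⟩) hpre

variable {a : α} {n : ℕ}

theorem getD_eq_replicate (hF : IsLZMW (replicate n a) F) (k : ℕ) :
    F.getD k [] = replicate (F.getD k []).length a := by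
  refine eq_replicate_of_mem fun b hb => ?_
  rw [getD_eq_getElem?_getD] at hb
  cases h : F[k]? with
  | none => simp [h] at hb
  | some w =>
    rw [h, Option.getD_some] at hb
    exact eq_of_mem_replicate (hF.1 ▸ mem_flatten_of_mem (mem_of_getElem? h) hb)

theorem flatten_drop_eq_replicate (hF : IsLZMW (replicate n a) F) (k : ℕ) :
    (F.drop k).flatten = replicate (n - (F.take k).flatten.length) a := by
  have hsplit : (F.take k).flatten ++ (F.drop k).flatten = replicate n a := by
    rw [← flatten_append, take_append_drop, hF.1]
  calc (F.drop k).flatten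
      = ((F.take k).flatten ++ (F.drop k).flatten).drop (F.take k).flatten.length :=
        (drop_left ..).symm
    _ = _ := by rw [hsplit, drop_replicate]

theorem unary_length_getD_add_two_eq_fib (hF : IsLZMW (replicate n a) F) {k : ℕ}
    (hprev : ∀ j < k + 2, (F.getD j []).length = fib (j + 1))
    (hkF : k + 2 < F.length) (hkn : fib (k + 5) ≤ n + 1) :
    (F.getD (k + 2) []).length = fib (k + 3) := by
  apply le_antisymm
  · refine length_le_of_mem_LZMWDict (hF.2 _ hkF).1 (fib_pos.2 (by omega)) fun i hi hik => ?_
    obtain ⟨i, rfl⟩ : ∃ i', i = i' + 1 := ⟨i - 1, by omega⟩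
    rw [Nat.add_sub_cancel, hprev i (by omega), hprev (i + 1) hik, ← fib_add_two]
    exact fib_mono (by omega)
  · have hpref : _ + 1 = fib (k + 4) := length_flatten_take_add_one_eq_fib hprev
    have hword : F.getD k [] ++ F.getD (k + 1) [] = replicate (fib (k + 3)) a := by
      rw [hF.getD_eq_replicate k, hF.getD_eq_replicate (k + 1), ← replicate_add,
        hprev k (by omega), hprev (k + 1) (by omega), fib_add_two (n := k + 1)]
    have hfits : F.getD (k + 1 - 1) [] ++ F.getD (k + 1) [] <+: (F.drop (k + 2)).flatten := by
      rw [Nat.add_sub_cancel, hword, hF.flatten_drop_eq_replicate, prefix_replicate_iff,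
        length_replicate]
      refine ⟨?_, rfl⟩
      have : fib (k + 5) = fib (k + 3) + fib (k + 4) := fib_add_two
      omega
    have hlower := hF.length_append_getD_le_length_getD (by omega) (by omega) hkF hfits
    rwa [← length_append, Nat.add_sub_cancel, hword, length_replicate] at hlower

theorem unary_length_getD_eq_fib (hF : IsLZMW (replicate n a) F) (k : ℕ)
    (hkn : fib (k + 3) ≤ n + 1) : k < F.length ∧ (F.getD k []).length = fib (k + 1) := by
  induction k using Nat.strong_induction_on with
  | _ k ih =>
    have hprev : ∀ j < k, (F.getD j []).length = fib (j + 1) := fun j hj =>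
      (ih j hj ((fib_mono (by omega)).trans hkn)).2
    have hkF : k < F.length := by
      refine hF.lt_length_of_length_flatten_take_lt ?_
      have : _ + 1 = fib (k + 2) := length_flatten_take_add_one_eq_fib hprev
      have : fib (k + 3) = fib (k + 1) + fib (k + 2) := fib_add_two
      have : 0 < fib (k + 1) := fib_pos.2 k.succ_pos
      rw [length_replicate]
      omega
    refine ⟨hkF, ?_⟩
    rcases k with _ | _ | k
    · exact hF.length_getD_of_lt_two (by omega) hkF
    · exact hF.length_getD_of_lt_two (by omega) hkF
    · exact hF.unary_length_getD_add_two_eq_fib hprev hkF hkn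

end IsLZMW

theorem lzmw_unary_factors_general {α : Type*} (a : α) (n : ℕ)
    (F : List (List α)) (hF : IsLZMW (List.replicate n a) F) :
    ∀ x : ℕ, 1 ≤ x → Nat.fib (x + 2) - 1 ≤ n →
      x - 1 < F.length ∧ F.getD (x - 1) [] = List.replicate (Nat.fib x) a := by
  rintro (_ | k) hx hxn
  · omega
  obtain ⟨hkF, hlen⟩ := hF.unary_length_getD_eq_fib k (Nat.sub_le_iff_le_add.1 hxn)
  rw [Nat.add_sub_cancel, hF.getD_eq_replicate k, hlen]
  exact ⟨hkF, rfl⟩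

/-- In the LZMW factorization of the unary string `T = aⁿ` (`n ≥ 1`), for every `x ≥ 1`
with `Fib(x+2) − 1 ≤ n`, the `x`-th factor (1-indexed) equals `a^(Fib x)`
(with `Fib 1 = Fib 2 = 1`): the factor lengths follow the Fibonacci numbers
`1, 1, 2, 3, 5, 8, …` as long as enough text remains. -/
theorem lzmw_unary_factors {α : Type*} (a : α) (n : ℕ) (hn : 1 ≤ n)
    (F : List (List α)) (hF : IsLZMW (List.replicate n a) F) :
    ∀ x : ℕ, 1 ≤ x → Nat.fib (x + 2) - 1 ≤ n →
      x - 1 < F.length ∧ F.getD (x - 1) [] = List.replicate (Nat.fib x) a :=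
  lzmw_unary_factors_general a n F hF
end

section
/- There exist real constants c₁, c₂ > 0 such that for every n ≥ 2 the number z of factors of the LZMW factorization of the unary string aⁿ satisfies c₁·log₂ n ≤ z ≤ c₂·log₂ n; hence the number of LZMW factors of aⁿ is Θ(log n). -/
/-!
Only factor lengths matter on a unary text. Every factor has at most twice the length of the
longest earlier one, so `n < 2 ^ z`. For the upper bound: the smallest dictionary length that overshoots
the remaining text is a sum of two factor lengths, and the larger of these two is itself a
dictionary length that fits; so as soon as the pair of the two previous factors no longer fits,
each factor covers more than half of what remains, and from then on the remaining length halves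
at every step. Before that moment the factor lengths grow at least like the Fibonacci numbers.
Both phases therefore last `O(log n)` steps.
-/

namespace LZMW

open Finset

/-- The lengths of the words of `LZMWDict F x` when the factors of a unary text have lengths
`L`. -/
def lengthDict (L : ℕ → ℕ) (x : ℕ) : Set ℕ :=
  {d | d = 1 ∨ ∃ i, 1 ≤ i ∧ i < x ∧ d = L (i - 1) + L i}

def rest (L : ℕ → ℕ) (z x : ℕ) : ℕ := ∑ y ∈ Ico x z, L y

/-- The two clauses of `IsLZMW` for a unary text, in terms of its factor lengths
`L 0, …, L (z - 1)`; `rest L z x` is the length of the text still to be parsed by factor `x`. -/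
structure IsUnaryLZMW (L : ℕ → ℕ) (z : ℕ) : Prop where
  mem_lengthDict : ∀ x < z, L x ∈ lengthDict L x
  le_of_mem_lengthDict : ∀ x < z, ∀ d ∈ lengthDict L x, d ≤ rest L z x → d ≤ L x

variable {L : ℕ → ℕ} {z x y w : ℕ}

lemma lengthDict_mono (hxy : x ≤ y) : lengthDict L x ⊆ lengthDict L y := by
  rintro d (rfl | ⟨i, hi, hix, rfl⟩)
  exacts [Or.inl rfl, Or.inr ⟨i, hi, hix.trans_le hxy, rfl⟩]

lemma rest_eq_add_rest_succ (hx : x < z) : rest L z x = L x + rest L z (x + 1) :=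
  sum_eq_sum_Ico_succ_bot hx L

lemma rest_self : rest L z z = 0 := by
  simp [rest]

lemma le_rest (hx : x < z) : L x ≤ rest L z x := by
  rw [rest_eq_add_rest_succ hx]
  omega

lemma rest_le_rest_zero : rest L z x ≤ rest L z 0 :=
  sum_le_sum_of_subset (Ico_subset_Ico_left (Nat.zero_le x))

namespace IsUnaryLZMW

variable (h : IsUnaryLZMW L z)
include h

lemma pos (hx : x < z) : 0 < L x := by
  induction x using Nat.strong_induction_on with
  | _ x ih =>
    rcases h.mem_lengthDict x hx with hL | ⟨i, -, hix, hL⟩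
    · omega
    · have := ih i hix (hix.trans hx)
      omega

lemma mem_lengthDict_of_le (hy : y < z) (hyx : y ≤ x) : L y ∈ lengthDict L x :=
  lengthDict_mono hyx (h.mem_lengthDict y hy)

lemma le_two_pow (hx : x < z) : L x ≤ 2 ^ x := by
  induction x using Nat.strong_induction_on with
  | _ x ih =>
    rcases h.mem_lengthDict x hx with hL | ⟨i, hi, hix, hL⟩
    · exact hL ▸ Nat.one_le_two_pow
    · have h₁ := ih (i - 1) (by omega) (by omega)
      have h₂ := ih i hix (hix.trans hx)
      have h₃ : 2 ^ (i - 1) ≤ 2 ^ i := Nat.pow_le_pow_right two_pos (Nat.sub_le i 1)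
      have h₄ : 2 ^ (i + 1) ≤ 2 ^ x := Nat.pow_le_pow_right two_pos hix
      rw [pow_succ] at h₄
      omega

lemma rest_zero_lt_two_pow : rest L z 0 < 2 ^ z :=
  calc rest L z 0 ≤ ∑ x ∈ range z, 2 ^ x := by
        rw [rest, ← range_eq_Ico]
        exact sum_le_sum fun x hx => h.le_two_pow (mem_range.1 hx)
    _ < 2 ^ z := Nat.geomSum_lt le_rfl fun _ => mem_range.1

lemma rest_lt_two_mul_of_exists_gt (hx : x < z)
    (hgt : ∃ d ∈ lengthDict L x, rest L z x < d) : rest L z x < 2 * L x := by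
  classical
  obtain ⟨hs, hsgt⟩ := Nat.find_spec hgt
  rcases hs with hs1 | ⟨i, hi, hix, hs⟩
  · have := le_rest (L := L) hx
    have := h.pos hx
    omega
  have h₁ := h.pos (show i - 1 < z by omega)
  have h₂ := h.pos (hix.trans hx)
  -- The larger summand `m` is a shorter dictionary length, so by minimality it fits.
  set m := max (L (i - 1)) (L i) with hm
  have hm_mem : m ∈ lengthDict L x := by
    rcases max_choice (L (i - 1)) (L i) with hmax | hmax <;> rw [hm, hmax]
    exacts [h.mem_lengthDict_of_le (by omega) (by omega),
      h.mem_lengthDict_of_le (hix.trans hx) hix.le]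
  have hm_fits : m ≤ rest L z x := by
    by_contra! hlt
    have := Nat.find_min' hgt ⟨hm_mem, hlt⟩
    omega
  have := h.le_of_mem_lengthDict x hx m hm_mem hm_fits
  omega

lemma add_le_or_rest_lt_two_mul (hx : x < z) (h2 : 2 ≤ x) :
    L (x - 2) + L (x - 1) ≤ L x ∨ rest L z x < 2 * L x := by
  have hpair : L (x - 2) + L (x - 1) ∈ lengthDict L x :=
    Or.inr ⟨x - 1, by omega, by omega, by rw [show x - 1 - 1 = x - 2 by omega]⟩
  by_cases hfits : L (x - 2) + L (x - 1) ≤ rest L z x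
  · exact Or.inl (h.le_of_mem_lengthDict x hx _ hpair hfits)
  · exact Or.inr (h.rest_lt_two_mul_of_exists_gt hx ⟨_, hpair, not_le.1 hfits⟩)

lemma rest_succ_lt_two_mul (hx₁ : 1 ≤ x) (hx : x + 1 < z) (hP : rest L z x < 2 * L x) :
    rest L z (x + 1) < 2 * L (x + 1) := by
  have hpair : L (x - 1) + L x ∈ lengthDict L (x + 1) :=
    Or.inr ⟨x, hx₁, x.lt_succ_self, rfl⟩
  refine h.rest_lt_two_mul_of_exists_gt hx ⟨_, hpair, ?_⟩
  have := rest_eq_add_rest_succ (L := L) (show x < z by omega)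
  omega

lemma rest_lt_two_mul_of_le (hw : 1 ≤ w) (hP : rest L z w < 2 * L w) (hwx : w ≤ x)
    (hx : x < z) : rest L z x < 2 * L x := by
  induction x, hwx using Nat.le_induction with
  | base => exact hP
  | succ x hwx ih => exact h.rest_succ_lt_two_mul (by omega) hx (ih (by omega))

lemma two_pow_mul_rest_le (hw : 1 ≤ w) (hP : rest L z w < 2 * L w) (hwx : w ≤ x)
    (hx : x < z) : 2 ^ (x - w) * rest L z x ≤ rest L z w := by
  induction x, hwx using Nat.le_induction with
  | base => simp
  | succ x hwx ih =>
    have hPx := h.rest_lt_two_mul_of_le hw hP hwx (by omega)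
    have hhalf : 2 * rest L z (x + 1) ≤ rest L z x := by
      have := rest_eq_add_rest_succ (L := L) (show x < z by omega)
      omega
    calc 2 ^ (x + 1 - w) * rest L z (x + 1)
          = 2 ^ (x - w) * (2 * rest L z (x + 1)) := by
          rw [show x + 1 - w = x - w + 1 by omega, pow_succ, mul_assoc]
      _ ≤ 2 ^ (x - w) * rest L z x := Nat.mul_le_mul_left _ hhalf
      _ ≤ rest L z w := ih (by omega)

lemma two_pow_half_le (hx : x < z)
    (hfib : ∀ y, 2 ≤ y → y ≤ x → L (y - 2) + L (y - 1) ≤ L y) :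
    2 ^ (x / 2) ≤ L x := by
  induction x using Nat.strong_induction_on with
  | _ x ih =>
    rcases Nat.lt_or_ge x 2 with hx2 | hx2
    · rw [Nat.div_eq_of_lt hx2, pow_zero]
      exact h.pos hx
    · have h₁ := ih (x - 2) (by omega) (by omega) fun y hy hyx => hfib y hy (by omega)
      have h₂ := ih (x - 1) (by omega) (by omega) fun y hy hyx => hfib y hy (by omega)
      have h₃ : 2 ^ ((x - 2) / 2) ≤ 2 ^ ((x - 1) / 2) :=
        Nat.pow_le_pow_right two_pos (by omega)
      have h₄ : x / 2 = (x - 2) / 2 + 1 := by omega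
      have := hfib x hx2 le_rfl
      rw [h₄, pow_succ]
      omega

lemma length_le_three_mul_log : z ≤ 3 * Nat.log 2 (rest L z 0) + 3 := by
  classical
  by_cases hz : z ≤ 2
  · omega
  have hP : ∃ w, 2 ≤ w ∧ w < z ∧ rest L z w < 2 * L w := by
    refine ⟨z - 1, by omega, by omega, ?_⟩
    have := rest_eq_add_rest_succ (L := L) (show z - 1 < z by omega)
    rw [Nat.sub_add_cancel (by omega), rest_self] at this
    have := h.pos (show z - 1 < z by omega)
    omega
  obtain ⟨hw2, hwz, hwP⟩ := Nat.find_spec hP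
  set w := Nat.find hP
  have hfib : ∀ y, 2 ≤ y → y ≤ w - 1 → L (y - 2) + L (y - 1) ≤ L y := fun y hy hyw =>
    (h.add_le_or_rest_lt_two_mul (by omega) hy).resolve_right
      fun hlt => Nat.find_min hP (show y < w by omega) ⟨hy, by omega, hlt⟩
  have hhead : 2 ^ ((w - 1) / 2) ≤ rest L z 0 :=
    (h.two_pow_half_le (by omega) hfib).trans
      ((le_rest (by omega)).trans rest_le_rest_zero)
  have htail : 2 ^ (z - 1 - w) ≤ rest L z 0 :=
    calc 2 ^ (z - 1 - w) ≤ 2 ^ (z - 1 - w) * rest L z (z - 1) :=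
          Nat.le_mul_of_pos_right _ ((h.pos (by omega)).trans_le (le_rest (by omega)))
      _ ≤ rest L z w := h.two_pow_mul_rest_le (by omega) hwP (by omega) (by omega)
      _ ≤ rest L z 0 := rest_le_rest_zero
  have := Nat.le_log_of_pow_le one_lt_two hhead
  have := Nat.le_log_of_pow_le one_lt_two htail
  omega

end IsUnaryLZMW

variable {α : Type*} {a : α} {n d : ℕ} {F : List (List α)}

def factorLengths (F : List (List α)) (x : ℕ) : ℕ := (F.getD x []).length

lemma length_flatten_drop (F : List (List α)) (x : ℕ) :
    (F.drop x).flatten.length = rest (factorLengths F) F.length x := by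
  by_cases hx : x < F.length
  · rw [List.drop_eq_getElem_cons hx, List.flatten_cons, List.length_append,
      length_flatten_drop F (x + 1), rest_eq_add_rest_succ hx, factorLengths,
      List.getD_eq_getElem _ _ hx]
  · simp [rest, List.drop_eq_nil_of_le (not_lt.1 hx), Ico_eq_empty_of_le (not_lt.1 hx)]
termination_by F.length - x

lemma getD_eq_replicate (hF : F.flatten = List.replicate n a) (x : ℕ) :
    F.getD x [] = List.replicate (factorLengths F x) a := by
  by_cases hx : x < F.length
  · have hinfix : F.getD x [] <:+: List.replicate n a := by
      rw [← hF, List.getD_eq_getElem _ _ hx]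
      exact List.infix_of_mem_flatten (List.getElem_mem hx)
    exact (List.infix_replicate_iff.1 hinfix).2
  · rw [factorLengths, List.getD_eq_default _ _ (not_lt.1 hx), List.length_nil,
      List.replicate_zero]

lemma flatten_drop_eq_replicate (hF : F.flatten = List.replicate n a) (x : ℕ) :
    (F.drop x).flatten = List.replicate (rest (factorLengths F) F.length x) a := by
  have hsuffix : (F.drop x).flatten <:+ List.replicate n a := by
    rw [← hF]
    conv_rhs => rw [← List.take_append_drop x F, List.flatten_append]
    exact List.suffix_append _ _
  rw [← length_flatten_drop]
  exact (List.suffix_replicate_iff.1 hsuffix).2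

lemma rest_factorLengths_zero (hF : F.flatten = List.replicate n a) :
    rest (factorLengths F) F.length 0 = n := by
  rw [← length_flatten_drop, List.drop_zero, hF, List.length_replicate]

lemma replicate_mem_LZMWDict (hF : F.flatten = List.replicate n a)
    (hd : d ∈ lengthDict (factorLengths F) x) : List.replicate d a ∈ LZMWDict F x := by
  rcases hd with rfl | ⟨i, hi, hix, rfl⟩
  · exact Or.inr ⟨a, rfl⟩
  · exact Or.inl ⟨i, hi, hix, by rw [List.replicate_add, ← getD_eq_replicate hF,
      ← getD_eq_replicate hF]⟩

lemma length_mem_lengthDict {w : List α} (hw : w ∈ LZMWDict F x) :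
    w.length ∈ lengthDict (factorLengths F) x := by
  rcases hw with ⟨i, hi, hix, rfl⟩ | ⟨c, rfl⟩
  · exact Or.inr ⟨i, hi, hix, List.length_append⟩
  · exact Or.inl rfl

lemma isUnaryLZMW_of_isLZMW (hF : IsLZMW (List.replicate n a) F) :
    IsUnaryLZMW (factorLengths F) F.length where
  mem_lengthDict x hx := length_mem_lengthDict (hF.2 x hx).1
  le_of_mem_lengthDict x hx d hd hfits := by
    have hprefix : List.replicate d a <+: (F.drop x).flatten := by
      rw [flatten_drop_eq_replicate hF.1, List.prefix_replicate_iff]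
      simpa using hfits
    simpa only [List.length_replicate, factorLengths] using
      (hF.2 x hx).2 _ (replicate_mem_LZMWDict hF.1 hd) hprefix

end LZMW

/-- There are constants `c₁, c₂ > 0` such that for every `n ≥ 2` the number `z` of LZMW
factors of the unary string `aⁿ` satisfies `c₁·log₂ n ≤ z ≤ c₂·log₂ n`;
hence the number of LZMW factors of `aⁿ` is `Θ(log n)`. -/
theorem lzmw_unary_num_factors {α : Type*} (a : α) :
    ∃ c₁ c₂ : ℝ, 0 < c₁ ∧ 0 < c₂ ∧
      ∀ (n : ℕ) (F : List (List α)), 2 ≤ n → IsLZMW (List.replicate n a) F →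
        c₁ * Real.logb 2 n ≤ (F.length : ℝ) ∧
        (F.length : ℝ) ≤ c₂ * Real.logb 2 n := by
  refine ⟨1, 6, one_pos, by norm_num, fun n F hn hF => ?_⟩
  have hL := LZMW.isUnaryLZMW_of_isLZMW hF
  have hrest := LZMW.rest_factorLengths_zero hF.1
  constructor
  · have hlt : n < 2 ^ F.length := hrest ▸ hL.rest_zero_lt_two_pow
    rw [one_mul, Real.logb_le_iff_le_rpow one_lt_two (by positivity), Real.rpow_natCast]
    exact_mod_cast hlt.le
  · have hz : F.length ≤ 3 * Nat.log 2 n + 3 := hrest ▸ hL.length_le_three_mul_log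
    have hlog : 1 ≤ Nat.log 2 n := Nat.log_pos one_lt_two hn
    calc (F.length : ℝ) ≤ 6 * (Nat.log 2 n : ℝ) := by
          exact_mod_cast (show F.length ≤ 6 * Nat.log 2 n by omega)
      _ ≤ 6 * Real.logb 2 n := by gcongr; exact Real.natLog_le_logb n 2
end

section
/- Let a and b be two distinct characters and define the strings G₁ = a, G₂ = b, and G_k = G_{k−2}·G_{k−1} for k ≥ 3. Then for every k ≥ 1, the LZMW factorization of the concatenated text T = G₁G₂⋯G_k has exactly k factors, namely F_i = G_i for every i ∈ [1..k]. -/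
/-- The Fibonacci-like words `G₁ = a`, `G₂ = b`, `G_k = G_{k−2}·G_{k−1}` for `k ≥ 3`. -/
def Gword {α : Type*} (a b : α) : ℕ → List α
  | 0 => []
  | 1 => [a]
  | 2 => [b]
  | (k + 3) => Gword a b (k + 1) ++ Gword a b (k + 2)

section Aux

variable {α : Type*} (a b : α)

lemma Gword_length : ∀ i, (Gword a b i).length = Nat.fib i
  | 0 => rfl
  | 1 => rfl
  | 2 => rfl
  | (k+3) => by
      simp only [Gword, List.length_append, Gword_length (k+1), Gword_length (k+2)]
      simp [Nat.fib_add_two]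

lemma Gword_succ_succ : ∀ i, 1 ≤ i → Gword a b (i+2) = Gword a b i ++ Gword a b (i+1)
  | (n+1), _ => rfl

def GT (a b : α) (m : ℕ) : List α := ((List.range m).map (fun i => Gword a b (i + 1))).flatten

lemma GT_succ (m : ℕ) : GT a b (m+1) = GT a b m ++ Gword a b (m+1) := by
  simp [GT, List.range_succ]

lemma GT_prefix {m k : ℕ} (h : m ≤ k) : GT a b m <+: GT a b k := by
  induction k with
  | zero => simpa using (show m = 0 by omega) ▸ List.prefix_refl _
  | succ n ih =>
    rcases Nat.lt_or_ge m (n+1) with h' | h'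
    · exact (ih (by omega)).trans (by rw [GT_succ]; exact List.prefix_append _ _)
    · have : m = n+1 := by omega
      subst this; exact List.prefix_refl _

lemma GT_length_lt {m k : ℕ} (h : m < k) : (GT a b m).length < (GT a b k).length := by
  induction k with
  | zero => omega
  | succ n ih =>
    have hle : (GT a b m).length ≤ (GT a b n).length := by
      rcases Nat.lt_or_ge m n with h' | h'
      · exact le_of_lt (ih h')
      · have : m = n := by omega
        subst this; exact le_rfl
    have : 0 < (Gword a b (n+1)).length := by
      rw [Gword_length]; exact Nat.fib_pos.2 (by omega)
    rw [GT_succ]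
    simp only [List.length_append]; omega

lemma take_flatten (F : List (List α)) {x : ℕ} (hx : x ≤ F.length)
    (hI : ∀ i < x, F.getD i [] = Gword a b (i+1)) :
    (F.take x).flatten = GT a b x := by
  have hEq : F.take x = (List.range x).map (fun i => Gword a b (i + 1)) := by
    apply List.ext_getElem
    · simp [Nat.min_eq_left hx]
    · intro n h1 h2
      have hn : n < x := by simpa using h2
      have hnF : n < F.length := lt_of_lt_of_le hn hx
      simp only [List.getElem_take, List.getElem_map, List.getElem_range]
      rw [← List.getD_eq_getElem F [] hnF]
      exact hI n hn
  rw [hEq]; rfl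

lemma dict_bound (F : List (List α)) {x : ℕ}
    (hI : ∀ i < x, F.getD i [] = Gword a b (i+1)) :
    ∀ w ∈ LZMWDict F x, w.length ≤ Nat.fib (x+1) := by
  intro w hw
  rcases hw with ⟨i, hi1, hix, rfl⟩ | ⟨c, rfl⟩
  · rw [hI (i-1) (by omega), hI i hix, show i-1+1 = i by omega,
      ← Gword_succ_succ a b i hi1, Gword_length]
    exact Nat.fib_mono (by omega)
  · have : 0 < Nat.fib (x+1) := Nat.fib_pos.2 (Nat.succ_pos x)
    simp only [List.length_singleton]; exact this

lemma G_mem_dict (F : List (List α)) {x : ℕ}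
    (hI : ∀ i < x, F.getD i [] = Gword a b (i+1)) :
    Gword a b (x+1) ∈ LZMWDict F x := by
  match x with
  | 0 => exact Or.inr ⟨a, rfl⟩
  | 1 => exact Or.inr ⟨b, rfl⟩
  | (n+2) =>
    refine Or.inl ⟨n+1, by omega, by omega, ?_⟩
    rw [show n+1-1 = n by omega, hI n (by omega), hI (n+1) (by omega)]
    rfl

lemma step (F : List (List α)) {k : ℕ} (hF : IsLZMW (GT a b k) F)
    {x : ℕ} (hx : x < F.length) (hxk : x < k)
    (hI : ∀ i < x, F.getD i [] = Gword a b (i+1)) :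
    F.getD x [] = Gword a b (x+1) := by
  obtain ⟨hmem, hmax⟩ := hF.2 x hx
  set R := (F.drop x).flatten with hR
  -- R is the remaining text
  have hsplit : GT a b x ++ R = GT a b k := by
    rw [← take_flatten a b F (le_of_lt hx) hI, hR, ← List.flatten_append,
      List.take_append_drop, hF.1]
  have hGpre : Gword a b (x+1) <+: R := by
    have h1 : GT a b x ++ Gword a b (x+1) <+: GT a b x ++ R := by
      rw [← GT_succ, hsplit]
      exact GT_prefix a b (by omega)
    exact (List.prefix_append_right_inj _).1 h1
  have h2 : Nat.fib (x+1) ≤ (F.getD x []).length := by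
    rw [← Gword_length a b]
    exact hmax _ (G_mem_dict a b F hI) hGpre
  have h1 : (F.getD x []).length ≤ Nat.fib (x+1) := dict_bound a b F hI _ hmem
  have hFpre : F.getD x [] <+: R := by
    rw [hR, List.drop_eq_getElem_cons hx, List.flatten_cons, ← List.getD_eq_getElem F [] hx]
    exact List.prefix_append _ _
  have hlen : (F.getD x []).length = (Gword a b (x+1)).length := by
    rw [Gword_length]; omega
  exact (List.prefix_of_prefix_length_le hFpre hGpre (le_of_eq hlen)).eq_of_length hlen


end Aux

/-- For distinct characters `a ≠ b` and every `k ≥ 1`, the LZMW factorization of the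
concatenated text `T = G₁G₂⋯G_k` has exactly `k` factors, namely `F_i = G_i`
for each `i ∈ [1..k]`. -/
theorem lzmw_gword_factors {α : Type*} (a b : α) (hab : a ≠ b) (k : ℕ) (hk : 1 ≤ k)
    (F : List (List α))
    (hF : IsLZMW (((List.range k).map (fun i => Gword a b (i + 1))).flatten) F) :
    F.length = k ∧ ∀ i, 1 ≤ i → i ≤ k → F.getD (i - 1) [] = Gword a b i := by
  have hF' : IsLZMW (GT a b k) F := hF
  have main : ∀ x, x < F.length → x < k → F.getD x [] = Gword a b (x+1) := by
    intro x
    induction x using Nat.strong_induction_on with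
    | _ x ih =>
      intro h1 h2
      exact step a b F hF' h1 h2 (fun i hi => ih i hi (by omega) (by omega))
  have hlen : F.length = k := by
    rcases lt_trichotmy_fix : lt_trichotomy F.length k with h | h | h
    · exfalso
      have ht : (F.take F.length).flatten = GT a b F.length :=
        take_flatten a b F le_rfl (fun i hi => main i hi (by omega))
      rw [List.take_length] at ht
      have hlt := GT_length_lt a b h
      rw [← ht, hF'.1] at hlt
      exact lt_irrefl _ hlt
    · exact h
    · exfalso
      have hIk : ∀ i < k, F.getD i [] = Gword a b (i+1) := fun i hi => main i (by omega) hi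
      have ht : (F.take k).flatten = GT a b k := take_flatten a b F (by omega) hIk
      have hdrop : (F.drop k).flatten = [] := by
        have h3 : (F.take k).flatten ++ (F.drop k).flatten = GT a b k := by
          rw [← List.flatten_append, List.take_append_drop, hF'.1]
        rw [ht] at h3
        have h4 := congrArg List.length h3
        simp only [List.length_append] at h4
        exact List.eq_nil_of_length_eq_zero (by omega)
      obtain ⟨hmem, -⟩ := hF'.2 k h
      have hk0 : F.getD k [] = [] := by
        have h2 : F.drop k = F.getD k [] :: F.drop (k+1) := by
          rw [List.drop_eq_getElem_cons h, List.getD_eq_getElem F [] h]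
        rw [h2, List.flatten_cons] at hdrop
        exact (List.append_eq_nil_iff.mp hdrop).1
      rw [hk0] at hmem
      rcases hmem with ⟨i, hi1, hik, heq⟩ | ⟨c, hc⟩
      · rw [hIk (i-1) (by omega), hIk i hik, show i-1+1 = i by omega] at heq
        have h5 := congrArg List.length heq
        simp only [List.length_nil, List.length_append, Gword_length] at h5
        have h6 : 0 < Nat.fib (i+1) := Nat.fib_pos.2 (by omega)
        omega
      · simp at hc
  refine ⟨hlen, fun i h1 h2 => ?_⟩
  have := main (i-1) (by omega) (by omega)
  rwa [Nat.sub_add_cancel h1] at this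
end

section
/- Let S be a string of length ≥ 2 whose first character c occurs at least twice in S, and let j ≥ 2 be the position of the second-leftmost occurrence of c in S. Then the prefix S[1..j] is closed (witnessed by the border consisting of the single character c), and every closed prefix of S of length at least 2 has length at least j; i.e., S[1..j] is the shortest closed prefix of S of length at least 2. -/
/-- `B` occurs in `X` at (0-indexed) position `p`. -/
def OccursAt {α : Type*} (B X : List α) (p : ℕ) : Prop :=
  p + B.length ≤ X.length ∧ (X.drop p).take B.length = B

/-- `X` is closed with witnessing border `B`: `B` is a proper substring of `X`
(here: a shorter string) occurring in `X` as a prefix and as a suffix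
and nowhere else. -/
def ClosedWithBorder {α : Type*} (X B : List α) : Prop :=
  B.length < X.length ∧
  OccursAt B X 0 ∧
  OccursAt B X (X.length - B.length) ∧
  ∀ p, OccursAt B X p → p = 0 ∨ p = X.length - B.length

/-- `X` is closed if some (possibly empty) border witnesses closedness. -/
def IsClosedString {α : Type*} (X : List α) : Prop :=
  ∃ B : List α, ClosedWithBorder X B

/-- Let `S` have length `≥ 2` and let its first character `c` occur at least twice;
let `j ≥ 2` be the (1-indexed) position of the second-leftmost occurrence of `c`.
Then the prefix `S[1..j]` is closed with the single-character border `c`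
(formalized as `S.take 1`), and every closed prefix of `S` of length at least `2`
has length at least `j`: `S[1..j]` is the shortest closed prefix of length `≥ 2`. -/
theorem shortest_closed_prefix {α : Type*} (S : List α) (h2 : 2 ≤ S.length)
    (j : ℕ) (hj : 2 ≤ j) (hjn : j ≤ S.length)
    (hocc : (S.drop (j - 1)).take 1 = S.take 1)
    (hsecond : ∀ i, 2 ≤ i → i < j → (S.drop (i - 1)).take 1 ≠ S.take 1) :
    ClosedWithBorder (S.take j) (S.take 1) ∧
    ∀ m, 2 ≤ m → m ≤ S.length → IsClosedString (S.take m) → j ≤ m := by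
  have h1S : 1 ≤ S.length := le_trans (by norm_num) h2
  have hlen1 : (S.take 1).length = 1 := by
    simp [List.length_take, Nat.min_eq_left h1S]
  -- key: for p+1 ≤ n, ((S.take n).drop p).take 1 = (S.drop p).take 1
  have key : ∀ (n p : ℕ), p + 1 ≤ n → ((S.take n).drop p).take 1 = (S.drop p).take 1 := by
    intro n p hpn
    rw [List.drop_take, List.take_take, Nat.min_eq_left (by omega)]
  have hlenj : (S.take j).length = j := by
    simp [List.length_take, Nat.min_eq_left hjn]
  constructor
  · refine ⟨by omega, ⟨by omega, ?_⟩, ⟨by omega, ?_⟩, ?_⟩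
    · rw [hlen1, List.drop_zero, List.take_take, Nat.min_eq_left (by omega)]
    · rw [hlen1, hlenj, key j (j - 1) (by omega), hocc]
    · intro p ⟨hp1, hp2⟩
      rw [hlen1, hlenj] at hp1
      rw [hlen1, key j p hp1] at hp2
      by_contra hcon
      push_neg at hcon
      rw [hlen1, hlenj] at hcon
      obtain ⟨h0, hj1⟩ := hcon
      exact hsecond (p + 1) (by omega) (by omega) (by simpa using hp2)
  · intro m hm hmS ⟨B, hBlt, ⟨_, hpre⟩, ⟨hsuf1, hsuf2⟩, _huniq⟩
    by_contra hcon
    push_neg at hcon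
    have hlenm : (S.take m).length = m := by
      simp [List.length_take, Nat.min_eq_left hmS]
    rw [hlenm] at hBlt hsuf1 hsuf2
    rcases Nat.eq_zero_or_pos B.length with hB0 | hBpos
    · -- empty border: position 1 is an occurrence distinct from 0 and m
      have := _huniq 1 ⟨by rw [hlenm]; omega, by
        rw [hB0, List.take_zero]; exact (List.length_eq_zero_iff.mp hB0).symm⟩
      rw [hlenm, hB0] at this
      omega
    · -- nonempty border: first char of B = first char of S, occurring at m - |B| ≥ 1
      have hfirst : ((S.take m).drop (m - B.length)).take 1 = B.take 1 := by
        conv_rhs => rw [← hsuf2]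
        rw [List.take_take, Nat.min_eq_left hBpos]
      have hBpre : B.take 1 = S.take 1 := by
        conv_lhs => rw [← hpre]
        rw [List.drop_zero, List.take_take, Nat.min_eq_left hBpos,
          List.take_take, Nat.min_eq_left (by omega : 1 ≤ m)]
      set p := m - B.length with hp
      have hkey := key m p (by omega)
      have : (S.drop p).take 1 = S.take 1 := by
        rw [← hkey, hfirst, hBpre]
      exact hsecond (p + 1) (by omega) (by omega) (by simpa using this)
end

section
/- Let F₁⋯F_z be the LZD factorization of a string T of length n ≥ 2. Then the factors F₁, …, F_{z−1} are pairwise distinct strings. -/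
lemma flatten_drop_eq {α : Type*} (F : List (List α)) {j : ℕ} (hj : j < F.length) :
    (F.drop j).flatten = F.getD j [] ++ (F.drop (j+1)).flatten := by
  rw [List.drop_eq_getElem_cons hj, List.flatten_cons, List.getD_eq_getElem _ _ hj]

lemma lzd_factor_ne_nil {α : Type*} (T : List α) (hT : T ≠ []) (F : List (List α))
    (hF : IsLZD T F) : ∀ x < F.length, F.getD x [] ≠ [] := by
  intro x
  induction x using Nat.strong_induction_on with
  | _ x ih =>
    intro hx hnil
    obtain ⟨hflat, hfac⟩ := hF
    obtain ⟨R₁, R₂, heq, hdict, hpre, hmax, _⟩ := hfac x hx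
    rw [hnil] at heq
    obtain ⟨h1, h2⟩ := List.append_eq_nil_iff.mp heq.symm
    by_cases hl : (F.drop x).flatten = []
    · rcases hdict with ⟨y, hy, hyeq⟩ | ⟨c, hc⟩
      · exact ih y hy (lt_trans hy hx) (h1 ▸ hyeq).symm
      · simp [h1] at hc
    · have hhead : [(F.drop x).flatten.head hl] <+: (F.drop x).flatten :=
        ⟨(F.drop x).flatten.tail, by simp⟩
      have := hmax _ (Or.inr ⟨_, rfl⟩) hhead
      simp [h1] at this

lemma lzd_aux {α : Type*} (T : List α) (hT : 2 ≤ T.length)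
    (F : List (List α)) (hF : IsLZD T F) :
    ∀ i j, i < F.length - 1 → j < F.length - 1 → i < j →
      F.getD i [] ≠ F.getD j [] := by
  intro i j hi hj hij h
  have hjF : j < F.length := by omega
  have hj1 : j + 1 < F.length := by omega
  obtain ⟨hflat, hfac⟩ := hF
  obtain ⟨R₁, R₂, heq, hdict, hpre, hmax, hcase⟩ := hfac j hjF
  have hFjpre : F.getD j [] <+: (F.drop j).flatten :=
    ⟨_, (flatten_drop_eq F hjF).symm⟩
  have hlen : (F.getD j []).length ≤ R₁.length :=
    hmax _ (Or.inl ⟨i, hij, h.symm⟩) hFjpre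
  have hR2 : R₂ = [] := by
    have hle := congrArg List.length heq
    rw [List.length_append] at hle
    have : R₂.length = 0 := by omega
    exact List.length_eq_zero_iff.mp this
  rcases hcase with ⟨hlen1, _⟩ | ⟨hlt, _, _, hmax2⟩
  · -- R₁ exhausts the text, but factor j+1 is nonempty
    have hFj1 : F.getD (j+1) [] ≠ [] :=
      lzd_factor_ne_nil T (by intro h; simp [h] at hT) F ⟨hflat, hfac⟩ (j+1) hj1
    rw [hR2, List.append_nil] at heq
    have hA := congrArg List.length heq
    have hl1 := congrArg List.length (flatten_drop_eq F hjF)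
    have hl2 := congrArg List.length (flatten_drop_eq F hj1)
    rw [List.length_append] at hl1 hl2
    have : (F.getD (j+1) []).length = 0 := by omega
    exact hFj1 (List.length_eq_zero_iff.mp this)
  · -- R₂ maximal but empty while text remains: contradiction with singleton
    set l := ((F.drop j).flatten).drop R₁.length with hl
    have hlne : l ≠ [] := by
      have hll : l.length = ((F.drop j).flatten).length - R₁.length := by
        rw [hl, List.length_drop]
      intro hn
      rw [hn, List.length_nil] at hll
      omega
    have hhead : [l.head hlne] <+: l := ⟨l.tail, by simp⟩
    have := hmax2 _ (Or.inr ⟨_, rfl⟩) hhead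
    simp [hR2] at this


/-- In the LZD factorization `F₁⋯F_z` of a string `T` of length `n ≥ 2`,
the factors `F₁, …, F_{z−1}` are pairwise distinct strings. -/
theorem lzd_factors_distinct {α : Type*} (T : List α) (hT : 2 ≤ T.length)
    (F : List (List α)) (hF : IsLZD T F) :
    ∀ i j, i < F.length - 1 → j < F.length - 1 → i ≠ j →
      F.getD i [] ≠ F.getD j [] := by
  intro i j hi hj hij
  rcases lt_or_gt_of_ne hij with hlt | hgt
  · exact lzd_aux T hT F hF i j hi hj hlt
  · exact fun h => lzd_aux T hT F hF j i hj hi hgt h.symm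
end
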